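/- Let ε ∈ [0,1] and let μ, ν be probability measures on metric spaces X and Y. If there exists an isometry T : X → Y with ‖T_♯μ − ν‖_TV ≤ ε, then GW^ε(μ,ν) = 0. -/

import Mathlib

open MeasureTheory

/-- Quadratic GW distortion cost of a (partial) coupling `π` on `X × Y`:
`E_{π⊗π}[(d_X(x,x')² − d_Y(y,y')²)²]^{1/2}`. -/
noncomputable def gwCost {X Y : Type*} [MetricSpace X] [MetricSpace Y]
    [MeasurableSpace X] [MeasurableSpace Y] (π : Measure (X × Y)) : ℝ :=
  Real.sqrt (∫ q, (dist q.1.1 q.2.1 ^ 2 - dist q.1.2 q.2.2 ^ 2) ^ 2 ∂(π.prod π))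

/-- Quadratic Gromov-Wasserstein distance. -/
noncomputable def GW {X Y : Type*} [MetricSpace X] [MetricSpace Y]
    [MeasurableSpace X] [MeasurableSpace Y] (μ : Measure X) (ν : Measure Y) : ℝ :=
  sInf (gwCost '' {π : Measure (X × Y) |
    π.map Prod.fst = μ ∧ π.map Prod.snd = ν})

/-- Partial Gromov-Wasserstein distance with trimming parameter `ε`:
infimum over partial couplings of total mass `1 − ε` with marginals dominated by `μ, ν`. -/
noncomputable def PGW {X Y : Type*} [MetricSpace X] [MetricSpace Y]
    [MeasurableSpace X] [MeasurableSpace Y] (ε : ℝ) (μ : Measure X) (ν : Measure Y) : ℝ :=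
  sInf (gwCost '' {π : Measure (X × Y) |
    π.map Prod.fst ≤ μ ∧ π.map Prod.snd ≤ ν ∧ π Set.univ = ENNReal.ofReal (1 - ε)})

/-- Total variation distance `sup_A |μ(A) − ν(A)|`. -/
noncomputable def tvDist {X : Type*} [MeasurableSpace X] (μ ν : Measure X) : ℝ :=
  sSup {r : ℝ | ∃ A : Set X, MeasurableSet A ∧ r = |(μ A).toReal - (ν A).toReal|}

/-- GW-resilience `ρ(μ, ε) = sup{GW(μ', μ) : μ' ≤ μ/(1−ε)}`. -/
noncomputable def resilience {X : Type*} [MetricSpace X] [MeasurableSpace X]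
    (μ : Measure X) (ε : ℝ) : ℝ :=
  sSup {r : ℝ | ∃ μ' : Measure X, IsProbabilityMeasure μ' ∧
    μ' ≤ ENNReal.ofReal (1 / (1 - ε)) • μ ∧ r = GW μ' μ}

/-! Let `A` be a Hahn decomposition set of `T_♯μ - ν`. The measure `ν|_A + (T_♯μ)|_Aᶜ` lies below
both `T_♯μ` and `ν` and has mass at least `1 - ‖T_♯μ - ν‖_TV ≥ 1 - ε`. Scale it down to mass
`1 - ε` and pull it back to `X` using its density with respect to `T_♯μ`, composed with `T`: this
gives `σ ≤ μ` with `T_♯σ` below `ν`. The graph coupling `(id, T)_♯σ` is then an admissible partial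
coupling, and its distortion vanishes because `T` is an isometry. -/

open Measure

section

variable {X Y : Type*} [MeasurableSpace X] [MeasurableSpace Y]

lemma map_withDensity_comp {μ : Measure X} {T : X → Y} (hT : Measurable T) {g : Y → ENNReal}
    (hg : Measurable g) : (μ.withDensity (g ∘ T)).map T = (μ.map T).withDensity g := by
  ext s hs
  rw [map_apply hT hs, withDensity_apply _ (hT hs), withDensity_apply _ hs,
    setLIntegral_map hs hg hT, Function.comp_def]

lemma exists_le_map_eq_of_le_map {μ : Measure X} [IsFiniteMeasure μ] {T : X → Y}
    (hT : Measurable T) {m : Measure Y} (hm : m ≤ μ.map T) : ∃ σ ≤ μ, σ.map T = m := by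
  have : IsFiniteMeasure m := isFiniteMeasure_of_le _ hm
  set g := m.rnDeriv (μ.map T)
  have hg_le_one : ∀ᵐ x ∂μ, g (T x) ≤ 1 := ae_of_ae_map hT.aemeasurable (rnDeriv_le_one_of_le hm)
  refine ⟨μ.withDensity (g ∘ T), ?_, ?_⟩
  · calc μ.withDensity (g ∘ T) ≤ μ.withDensity 1 := withDensity_mono hg_le_one
      _ = μ := withDensity_one
  · rw [map_withDensity_comp hT (measurable_rnDeriv _ _),
      withDensity_rnDeriv_eq _ _ (absolutelyContinuous_of_le hm)]

lemma exists_le_measure_univ_eq {m : Measure Y} [IsFiniteMeasure m] {a : ENNReal}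
    (ha : a ≤ m Set.univ) : ∃ m' ≤ m, m' Set.univ = a := by
  by_cases h0 : m Set.univ = 0
  · exact ⟨m, le_rfl, by rw [h0]; exact (nonpos_iff_eq_zero.mp (h0 ▸ ha)).symm⟩
  refine ⟨(a / m Set.univ) • m, ?_, ?_⟩
  · have hc : a / m Set.univ ≤ 1 := ENNReal.div_le_of_le_mul (by rwa [one_mul])
    calc (a / m Set.univ) • m ≤ (1 : ENNReal) • m := by
          intro s; simp only [Measure.smul_apply, smul_eq_mul]; gcongr
      _ = m := one_smul _ _
  · rw [Measure.smul_apply, smul_eq_mul, ENNReal.div_mul_cancel h0 (measure_ne_top _ _)]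

lemma restrict_le_restrict_of_forall_subset {μ ν : Measure X} {A : Set X} (hA : MeasurableSet A)
    (h : ∀ t, MeasurableSet t → t ⊆ A → μ t ≤ ν t) : μ.restrict A ≤ ν.restrict A := by
  refine (Measure.le_iff).2 fun s hs => ?_
  rw [restrict_apply hs, restrict_apply hs]
  exact h _ (hs.inter hA) Set.inter_subset_right

lemma sub_le_tvDist (μ ν : Measure X) [IsFiniteMeasure μ] [IsFiniteMeasure ν] {A : Set X}
    (hA : MeasurableSet A) : μ.real A - ν.real A ≤ tvDist μ ν := by
  have hbdd : BddAbove {r : ℝ | ∃ A : Set X, MeasurableSet A ∧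
      r = |(μ A).toReal - (ν A).toReal|} := by
    refine ⟨μ.real Set.univ + ν.real Set.univ, ?_⟩
    rintro r ⟨B, -, rfl⟩
    have hμB : μ.real B ≤ μ.real Set.univ := measureReal_mono (Set.subset_univ B)
    have hνB : ν.real B ≤ ν.real Set.univ := measureReal_mono (Set.subset_univ B)
    have hμB₀ : 0 ≤ μ.real B := measureReal_nonneg
    have hνB₀ : 0 ≤ ν.real B := measureReal_nonneg
    change |μ.real B - ν.real B| ≤ _
    exact abs_le.2 ⟨by linarith, by linarith⟩
  exact (le_abs_self _).trans (le_csSup hbdd ⟨A, hA, rfl⟩)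

lemma exists_le_le_sub_tvDist_le_measureReal_univ (μ ν : Measure X) [IsFiniteMeasure μ]
    [IsFiniteMeasure ν] :
    ∃ m ≤ μ, m ≤ ν ∧ μ.real Set.univ - tvDist μ ν ≤ m.real Set.univ := by
  obtain ⟨A, hA, hνμ, hμν⟩ := hahn_decomposition μ ν
  refine ⟨ν.restrict A + μ.restrict Aᶜ, ?_, ?_, ?_⟩
  · calc ν.restrict A + μ.restrict Aᶜ ≤ μ.restrict A + μ.restrict Aᶜ :=
          add_le_add_left (restrict_le_restrict_of_forall_subset hA hνμ) _
      _ = μ := restrict_add_restrict_compl hA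
  · calc ν.restrict A + μ.restrict Aᶜ ≤ ν.restrict A + ν.restrict Aᶜ :=
          add_le_add_right (restrict_le_restrict_of_forall_subset hA.compl hμν) _
      _ = ν := restrict_add_restrict_compl hA
  · have htv := sub_le_tvDist μ ν hA
    have hμA := measureReal_add_measureReal_compl (μ := μ) hA
    rw [measureReal_add_apply, measureReal_restrict_apply_univ, measureReal_restrict_apply_univ]
    linarith

/-- `f` need not be measurable (the σ-algebras are arbitrary): if it is not integrable, its
integral is `0` by convention. -/
lemma integral_map_eq_zero_of_forall_comp_eq_zero {μ : Measure X} {φ : X → Y}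
    (hφ : AEMeasurable φ μ) {f : Y → ℝ} (hf : ∀ x, f (φ x) = 0) : ∫ y, f y ∂(μ.map φ) = 0 := by
  by_cases hi : Integrable f (μ.map φ)
  · simp only [integral_map hφ hi.aestronglyMeasurable, hf, integral_zero]
  · exact integral_undef hi

end

section

variable {X Y : Type*} [MetricSpace X] [MetricSpace Y] [MeasurableSpace X] [MeasurableSpace Y]

lemma gwCost_map_graph_of_isometry {σ : Measure X} [SFinite σ] {T : X → Y} (hT : Isometry T)
    (hTm : Measurable T) : gwCost (σ.map fun x => (x, T x)) = 0 := by
  have hgraph : Measurable fun x => (x, T x) := measurable_id.prodMk hTm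
  rw [gwCost, map_prod_map σ σ hgraph hgraph,
    integral_map_eq_zero_of_forall_comp_eq_zero (hgraph.prodMap hgraph).aemeasurable,
    Real.sqrt_zero]
  intro p
  simp [hT.dist_eq]

lemma PGW_eq_zero_of_gwCost_eq_zero {ε : ℝ} {μ : Measure X} {ν : Measure Y}
    {π : Measure (X × Y)} (hfst : π.map Prod.fst ≤ μ) (hsnd : π.map Prod.snd ≤ ν)
    (hmass : π Set.univ = ENNReal.ofReal (1 - ε)) (hπ : gwCost π = 0) : PGW ε μ ν = 0 := by
  refine IsLeast.csInf_eq ⟨⟨π, ⟨hfst, hsnd, hmass⟩, hπ⟩, ?_⟩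
  rintro r ⟨π', -, rfl⟩
  exact Real.sqrt_nonneg _

lemma PGW_eq_zero_of_isometry {ε : ℝ} {μ : Measure X} {ν : Measure Y} {T : X → Y}
    (hT : Isometry T) (hTm : Measurable T) {σ : Measure X} [IsFiniteMeasure σ] (hσμ : σ ≤ μ)
    (hσν : σ.map T ≤ ν) (hmass : σ Set.univ = ENNReal.ofReal (1 - ε)) : PGW ε μ ν = 0 := by
  have hgraph : Measurable fun x => (x, T x) := measurable_id.prodMk hTm
  refine PGW_eq_zero_of_gwCost_eq_zero ?_ ?_ ?_ (gwCost_map_graph_of_isometry (σ := σ) hT hTm)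
  · rwa [map_map measurable_fst hgraph, Function.comp_def, map_id']
  · rwa [map_map measurable_snd hgraph, Function.comp_def]
  · rwa [map_apply hgraph MeasurableSet.univ, Set.preimage_univ]

end

theorem stmt4_general {X Y : Type*} [MetricSpace X] [MetricSpace Y]
    [MeasurableSpace X] [MeasurableSpace Y]
    (ε : ℝ)
    (μ : Measure X) (ν : Measure Y)
    (hμ : IsProbabilityMeasure μ) (hν : IsProbabilityMeasure ν)
    (T : X → Y) (hT : Isometry T) (hTm : Measurable T)
    (htv : tvDist (μ.map T) ν ≤ ε) :
    PGW ε μ ν = 0 := by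
  have : IsProbabilityMeasure (μ.map T) := isProbabilityMeasure_map hTm.aemeasurable
  obtain ⟨m, hmT, hmν, hm⟩ := exists_le_le_sub_tvDist_le_measureReal_univ (μ.map T) ν
  have : IsFiniteMeasure m := isFiniteMeasure_of_le _ hmT
  have hmass : ENNReal.ofReal (1 - ε) ≤ m Set.univ := by
    rw [probReal_univ] at hm
    exact ENNReal.ofReal_le_of_le_toReal (by rw [← measureReal_def]; linarith)
  obtain ⟨m', hm'm, hm'⟩ := exists_le_measure_univ_eq hmass
  obtain ⟨σ, hσμ, rfl⟩ := exists_le_map_eq_of_le_map hTm (hm'm.trans hmT)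
  have : IsFiniteMeasure σ := isFiniteMeasure_of_le _ hσμ
  refine PGW_eq_zero_of_isometry hT hTm hσμ (hm'm.trans hmν) ?_
  rwa [map_apply hTm MeasurableSet.univ, Set.preimage_univ] at hm'

theorem stmt4 {X Y : Type*} [MetricSpace X] [MetricSpace Y]
    [MeasurableSpace X] [MeasurableSpace Y]
    (ε : ℝ) (hε : ε ∈ Set.Icc (0 : ℝ) 1)
    (μ : Measure X) (ν : Measure Y)
    (hμ : IsProbabilityMeasure μ) (hν : IsProbabilityMeasure ν)
    (T : X → Y) (hT : Isometry T) (hTm : Measurable T)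
    (htv : tvDist (μ.map T) ν ≤ ε) :
    PGW ε μ ν = 0 :=
  stmt4_general ε μ ν hμ hν T hT hTm htv
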